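/- Let α > 1/2, set γ(α) = α/(2α−1) and z(y,α) = y²(2α−1)/2, and let G(y,α) = y·M(γ(α), 3/2, z(y,α)) + [Γ(γ(α)−1/2) / (√(2(2α−1))·Γ(γ(α)))]·M(γ(α)−1/2, 1/2, z(y,α)). Then there exists B > 0 such that G(B,α) = B·G_y(B,α), where G_y denotes the derivative of G with respect to y. -/

import Mathlib

open Real Filter Polynomial

/-- Confluent hypergeometric function of the first kind,
`M(γ,β,z) = ∑ (γ)⁽ⁿ⁾ zⁿ / ((β)⁽ⁿ⁾ n!)`. -/
noncomputable def M (γ β z : ℝ) : ℝ :=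
  ∑' n : ℕ, ((ascPochhammer ℝ n).eval γ * z ^ n) /
    ((ascPochhammer ℝ n).eval β * (Nat.factorial n : ℝ))

/-- The candidate solution for `α > 1/2`. -/
noncomputable def G (α y : ℝ) : ℝ :=
  y * M (α / (2 * α - 1)) (3 / 2) (y ^ 2 * (2 * α - 1) / 2) +
    Real.Gamma (α / (2 * α - 1) - 1 / 2) /
      (Real.sqrt (2 * (2 * α - 1)) * Real.Gamma (α / (2 * α - 1))) *
    M (α / (2 * α - 1) - 1 / 2) (1 / 2) (y ^ 2 * (2 * α - 1) / 2)

/-!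
`G α y / y` tends to `+∞` both as `y → 0⁺` (the second summand of `G` stays above a positive
constant) and as `y → ∞` (the first summand grows like `y³`). Hence `G α y / y` attains a minimum
at some `B > 0`, and the vanishing of its derivative there is the equation `G = y G_y`.
-/

open FormalMultilinearSeries Topology Set

theorem exists_isMinOn_Ioi_of_tendsto_atTop {F : ℝ → ℝ} (hF : ContinuousOn F (Ioi 0))
    (h0 : Tendsto F (𝓝[>] 0) atTop) (hinf : Tendsto F atTop atTop) :
    ∃ B, 0 < B ∧ IsMinOn F (Ioi 0) B := by
  have hcont : Continuous fun t => F (exp t) :=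
    hF.comp_continuous continuous_exp exp_pos
  have hlim : Tendsto (fun t => F (exp t)) (cocompact ℝ) atTop := by
    rw [cocompact_eq_atBot_atTop]
    exact (h0.comp tendsto_exp_atBot_nhdsGT).sup (hinf.comp tendsto_exp_atTop)
  obtain ⟨t, ht⟩ := hcont.exists_forall_le hlim
  refine ⟨exp t, exp_pos t, fun y (hy : 0 < y) => ?_⟩
  have := ht (log y)
  rwa [exp_log hy] at this

theorem exists_eq_mul_deriv_of_tendsto_div_atTop {f : ℝ → ℝ}
    (hf : ∀ y, 0 < y → DifferentiableAt ℝ f y)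
    (h0 : Tendsto (fun y => f y / y) (𝓝[>] 0) atTop)
    (hinf : Tendsto (fun y => f y / y) atTop atTop) :
    ∃ B, 0 < B ∧ f B = B * deriv f B := by
  have hcont : ContinuousOn (fun y => f y / y) (Ioi 0) := fun y (hy : 0 < y) =>
    ((hf y hy).continuousAt.div continuousAt_id hy.ne').continuousWithinAt
  obtain ⟨B, hB, hmin⟩ := exists_isMinOn_Ioi_of_tendsto_atTop hcont h0 hinf
  have hderiv : HasDerivAt (fun y => f y / y) ((deriv f B * B - f B * 1) / B ^ 2) B :=
    (hf B hB).hasDerivAt.div (hasDerivAt_id B) hB.ne'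
  have hzero := (hmin.isLocalMin (Ioi_mem_nhds hB)).hasDerivAt_eq_zero hderiv
  refine ⟨B, hB, ?_⟩
  field_simp at hzero
  linarith

section ConfluentHypergeometric

noncomputable def Mcoeff (γ β : ℝ) (n : ℕ) : ℝ :=
  (ascPochhammer ℝ n).eval γ / ((ascPochhammer ℝ n).eval β * (Nat.factorial n : ℝ))

variable {γ β : ℝ}

theorem Mcoeff_pos (hγ : 0 < γ) (hβ : 0 < β) (n : ℕ) : 0 < Mcoeff γ β n := by
  have := ascPochhammer_pos n γ hγ
  have := ascPochhammer_pos n β hβ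
  unfold Mcoeff
  positivity

theorem Mcoeff_succ_div (hγ : 0 < γ) (hβ : 0 < β) (n : ℕ) :
    Mcoeff γ β (n + 1) / Mcoeff γ β n = (γ + n) / ((β + n) * (n + 1)) := by
  have := (ascPochhammer_pos n γ hγ).ne'
  have := (ascPochhammer_pos n β hβ).ne'
  have : β + n ≠ 0 := by positivity
  unfold Mcoeff
  rw [ascPochhammer_succ_eval, ascPochhammer_succ_eval, Nat.factorial_succ]
  push_cast
  field_simp

theorem radius_ofScalars_Mcoeff (hγ : 0 < γ) (hβ : 0 < β) :
    (ofScalars ℝ (Mcoeff γ β)).radius = ⊤ := by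
  refine ofScalars_radius_eq_top_of_tendsto ℝ _
    (Eventually.of_forall fun n => (Mcoeff_pos hγ hβ n).ne') ?_
  simp only [Real.norm_eq_abs, abs_of_pos (Mcoeff_pos hγ hβ _), Nat.succ_eq_add_one,
    Mcoeff_succ_div hγ hβ]
  refine squeeze_zero (fun n => by positivity) (fun n => ?_)
    (by simpa using tendsto_one_div_add_atTop_nhds_zero_nat.const_mul (γ / β + 1))
  -- `γ + n ≤ (γ / β + 1) (β + n)`
  rw [← div_eq_mul_inv, div_le_div_iff₀ (by positivity) (by positivity)]
  have : γ / β * β = γ := div_mul_cancel₀ γ hβ.ne'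
  have : 0 ≤ γ / β * n := by positivity
  nlinarith

theorem ofScalars_Mcoeff_sum : (ofScalars ℝ (Mcoeff γ β)).sum = M γ β := by
  funext z
  refine tsum_congr fun n => ?_
  rw [ofScalars_apply_eq, smul_eq_mul, Mcoeff, div_mul_eq_mul_div]

theorem hasFPowerSeriesOnBall_M (hγ : 0 < γ) (hβ : 0 < β) :
    HasFPowerSeriesOnBall (M γ β) (ofScalars ℝ (Mcoeff γ β)) 0 ⊤ := by
  have h := (ofScalars ℝ (Mcoeff γ β)).hasFPowerSeriesOnBall
    (by rw [radius_ofScalars_Mcoeff hγ hβ]; exact ENNReal.zero_lt_top)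
  rwa [radius_ofScalars_Mcoeff hγ hβ, ofScalars_Mcoeff_sum] at h

theorem differentiable_M (hγ : 0 < γ) (hβ : 0 < β) : Differentiable ℝ (M γ β) :=
  fun z => ((hasFPowerSeriesOnBall_M hγ hβ).analyticOnNhd z (by simp)).differentiableAt

theorem one_add_mul_div_le_M (hγ : 0 < γ) (hβ : 0 < β) {z : ℝ} (hz : 0 ≤ z) :
    1 + γ * z / β ≤ M γ β z := by
  have hsum : HasSum (fun n => z ^ n * Mcoeff γ β n) (M γ β z) := by
    simpa using (hasFPowerSeriesOnBall_M hγ hβ).hasSum (y := z) (by simp)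
  have hterm (n : ℕ) : 0 ≤ z ^ n * Mcoeff γ β n := by
    have := Mcoeff_pos hγ hβ n
    positivity
  calc 1 + γ * z / β = ∑ n ∈ Finset.range 2, z ^ n * Mcoeff γ β n := by
        simp [Finset.sum_range_succ, Mcoeff, mul_div_right_comm, mul_comm]
    _ ≤ M γ β z := sum_le_hasSum _ (fun n _ => hterm n) hsum

theorem one_le_M (hγ : 0 < γ) (hβ : 0 < β) {z : ℝ} (hz : 0 ≤ z) : 1 ≤ M γ β z := by
  have := one_add_mul_div_le_M hγ hβ hz
  have : 0 ≤ γ * z / β := by positivity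
  linarith

theorem tendsto_M_atTop (hγ : 0 < γ) (hβ : 0 < β) : Tendsto (M γ β) atTop atTop := by
  refine tendsto_atTop_mono' _ ?_
    (tendsto_atTop_add_const_left _ 1 ((tendsto_id.const_mul_atTop hγ).atTop_div_const hβ))
  filter_upwards [eventually_ge_atTop 0] with z hz
  exact one_add_mul_div_le_M hγ hβ hz

end ConfluentHypergeometric

section G

variable {α : ℝ}

theorem div_two_mul_sub_one_sub_half (hα : 1 / 2 < α) :
    α / (2 * α - 1) - 1 / 2 = 1 / (2 * (2 * α - 1)) := by
  rw [div_sub_div _ _ (by linarith) two_ne_zero, div_eq_div_iff (by nlinarith) (by nlinarith)]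
  ring

theorem div_two_mul_sub_one_sub_half_pos (hα : 1 / 2 < α) : 0 < α / (2 * α - 1) - 1 / 2 := by
  rw [div_two_mul_sub_one_sub_half hα]
  have : 0 < 2 * α - 1 := by linarith
  positivity

theorem div_two_mul_sub_one_pos (hα : 1 / 2 < α) : 0 < α / (2 * α - 1) := by
  linarith [div_two_mul_sub_one_sub_half_pos hα]

theorem Gamma_div_sqrt_mul_Gamma_pos (hα : 1 / 2 < α) :
    0 < Real.Gamma (α / (2 * α - 1) - 1 / 2) /
      (Real.sqrt (2 * (2 * α - 1)) * Real.Gamma (α / (2 * α - 1))) := by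
  have := Real.Gamma_pos_of_pos (div_two_mul_sub_one_pos hα)
  have := Real.Gamma_pos_of_pos (div_two_mul_sub_one_sub_half_pos hα)
  have : 0 < 2 * α - 1 := by linarith
  positivity

theorem differentiable_G (hα : 1 / 2 < α) : Differentiable ℝ (G α) := by
  have h₁ := differentiable_M (div_two_mul_sub_one_pos hα) (by norm_num : (0 : ℝ) < 3 / 2)
  have h₂ := differentiable_M (div_two_mul_sub_one_sub_half_pos hα) (by norm_num : (0 : ℝ) < 1 / 2)
  unfold G
  fun_prop

theorem Gamma_div_sqrt_mul_Gamma_le_G (hα : 1 / 2 < α) {y : ℝ} (hy : 0 ≤ y) :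
    Real.Gamma (α / (2 * α - 1) - 1 / 2) /
      (Real.sqrt (2 * (2 * α - 1)) * Real.Gamma (α / (2 * α - 1))) ≤ G α y := by
  have hz : 0 ≤ y ^ 2 * (2 * α - 1) / 2 := by nlinarith
  have h₁ := one_le_M (div_two_mul_sub_one_pos hα) (by norm_num : (0 : ℝ) < 3 / 2) hz
  have h₂ := one_le_M (div_two_mul_sub_one_sub_half_pos hα) (by norm_num : (0 : ℝ) < 1 / 2) hz
  have hk := Gamma_div_sqrt_mul_Gamma_pos hα
  unfold G
  nlinarith

theorem tendsto_G_div_nhdsGT_zero (hα : 1 / 2 < α) :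
    Tendsto (fun y => G α y / y) (𝓝[>] 0) atTop := by
  refine tendsto_atTop_mono' _ ?_
    (tendsto_inv_nhdsGT_zero.const_mul_atTop (Gamma_div_sqrt_mul_Gamma_pos hα))
  filter_upwards [self_mem_nhdsWithin] with y (hy : 0 < y)
  rw [← div_eq_mul_inv]
  exact div_le_div_of_nonneg_right (Gamma_div_sqrt_mul_Gamma_le_G hα hy.le) hy.le

theorem tendsto_G_div_atTop (hα : 1 / 2 < α) : Tendsto (fun y => G α y / y) atTop atTop := by
  have hγ := div_two_mul_sub_one_pos hα
  have hγ' := div_two_mul_sub_one_sub_half_pos hα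
  have hz : Tendsto (fun y : ℝ => y ^ 2 * (2 * α - 1) / 2) atTop atTop :=
    ((tendsto_pow_atTop two_ne_zero).atTop_mul_const (by linarith)).atTop_div_const two_pos
  refine tendsto_atTop_mono' _ ?_
    ((tendsto_M_atTop hγ (by norm_num : (0 : ℝ) < 3 / 2)).comp hz)
  filter_upwards [eventually_gt_atTop 0] with y hy
  have hk := Gamma_div_sqrt_mul_Gamma_pos hα
  have h₂ := one_le_M hγ' (by norm_num : (0 : ℝ) < 1 / 2)
    (by nlinarith : 0 ≤ y ^ 2 * (2 * α - 1) / 2)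
  rw [Function.comp_apply, le_div_iff₀ hy]
  unfold G
  nlinarith

end G

theorem stmt_12 (α : ℝ) (hα : 1 / 2 < α) :
    ∃ B : ℝ, 0 < B ∧ G α B = B * deriv (fun y => G α y) B :=
  exists_eq_mul_deriv_of_tendsto_div_atTop (fun y _ => differentiable_G hα y)
    (tendsto_G_div_nhdsGT_zero hα) (tendsto_G_div_atTop hα)
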